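/- arXiv:2502.03551 — 2 statements merged into one kernel-verified Lean document; each statement's English description precedes it below -/
import Mathlib

section
/- Let α ∈ (0, 1/2), and suppose the φ-mixing coefficients of the stationary Markov chain satisfy φ_m ≤ D r^m for all m ≥ 1, for some constants D > 0 and 0 < r < 1. Then for every t ≥ 1, 2·Σ_{1 ≤ i < j ≤ t} (1/i)(1/j) · Π_{k=i+1}^{t}(1 − α/k) · Π_{l=j+1}^{t}(1 − α/l) · ∫_Z ∫_Z ⟨f(z), f(z')⟩ P^{j−i}(z, dz') dρ(z) ≤ (24σ²/(1−α)) · (Dr/(1−r)) · (1/t)^α. -/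
/-!
Conditionally on `z`, the inner integral equals `⟪f z, ∫ f d(Pᵐ z) - ∫ f dρ⟫` because `f` is
centred. Pairing the difference of means `v` with its own direction and applying the layer-cake
formula to the bounded function `⟪v, f⟫` gives `‖v‖ ≤ 2σ · sup_B |Pᵐ(z, B) - ρ(B)|`, so the
`(i, j)` cross integral is at most `2σ²Dr^(j-i)` in absolute value. Summing the geometric series
in `j` leaves `Σ_i i⁻² ∏_{i<k≤t} (1 - α/k)`. Since `1 - α/k ≤ (k/(k+1))^α`, the product telescopes
to at most `((i+1)/(t+1))^α ≤ 2√i · t^(-α)`, and `Σ_i √i/i² ≤ 3` by telescoping against `2/√i`.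
-/

open MeasureTheory ProbabilityTheory
open scoped ENNReal RealInnerProductSpace

/-- The `m`-step transition kernel obtained by iterating `P`. -/
noncomputable def kernelIter {Z : Type*} [MeasurableSpace Z] (P : Kernel Z Z) : ℕ → Kernel Z Z
  | 0 => Kernel.id
  | m + 1 => (kernelIter P m).comp P

/-- The φ-mixing coefficient of the stationary Markov chain with kernel `P` and
invariant distribution `ρ`. -/
noncomputable def phiCoef {Z : Type*} [MeasurableSpace Z] (P : Kernel Z Z) (ρ : Measure Z)
    (m : ℕ) : ℝ :=
  essSup (fun z => ⨆ B : {B : Set Z // MeasurableSet B},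
    |(kernelIter P m z B.1).toReal - (ρ B.1).toReal|) ρ

section TotalVariation

variable {Z : Type*} [MeasurableSpace Z]

theorem integral_sub_integral_le_of_mem_Icc {μ ν : Measure Z}
    [IsFiniteMeasure μ] [IsFiniteMeasure ν] {h : Z → ℝ} (hh : Measurable h) {M : ℝ} (hM : 0 ≤ M)
    (h_mem : ∀ z, h z ∈ Set.Icc 0 M) {d : ℝ}
    (hd : ∀ B, MeasurableSet B → |μ.real B - ν.real B| ≤ d) :
    ∫ z, h z ∂μ - ∫ z, h z ∂ν ≤ M * d := by
  have layerCake (π : Measure Z) [IsFiniteMeasure π] :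
      ∫ z, h z ∂π = ∫ t in Set.Ioc 0 M, π.real {z | t ≤ h z} := by
    have hint : Integrable h π := .of_bound hh.aestronglyMeasurable M
      (.of_forall fun z => by simpa [abs_of_nonneg (h_mem z).1] using (h_mem z).2)
    exact hint.integral_eq_integral_Ioc_meas_le (.of_forall fun z => (h_mem z).1)
        (.of_forall fun z => (h_mem z).2)
  have integrableOn (π : Measure Z) [IsFiniteMeasure π] :
      IntegrableOn (fun t => π.real {z | t ≤ h z}) (Set.Ioc 0 M) := by
    have hanti : Antitone fun t => π.real {z | t ≤ h z} :=
      fun s t hst => measureReal_mono fun z hz => hst.trans hz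
    exact (hanti.locallyIntegrable.integrableOn_isCompact isCompact_Icc).mono_set
      Set.Ioc_subset_Icc_self
  calc ∫ z, h z ∂μ - ∫ z, h z ∂ν
      = ∫ t in Set.Ioc 0 M, (μ.real {z | t ≤ h z} - ν.real {z | t ≤ h z}) := by
        rw [layerCake μ, layerCake ν, integral_sub (integrableOn μ) (integrableOn ν)]
    _ ≤ d * volume.real (Set.Ioc 0 M) :=
        (Real.le_norm_self _).trans <| norm_setIntegral_le_of_norm_le_const measure_Ioc_lt_top
          fun t _ => hd _ (hh measurableSet_Ici)
    _ = M * d := by rw [Real.volume_real_Ioc_of_le hM, sub_zero, mul_comm]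

theorem integral_sub_integral_le_of_abs_le {μ ν : Measure Z}
    [IsProbabilityMeasure μ] [IsProbabilityMeasure ν] {g : Z → ℝ} (hg : Measurable g) {c : ℝ}
    (hgc : ∀ z, |g z| ≤ c) {d : ℝ} (hd : ∀ B, MeasurableSet B → |μ.real B - ν.real B| ≤ d) :
    ∫ z, g z ∂μ - ∫ z, g z ∂ν ≤ 2 * c * d := by
  obtain ⟨z₀⟩ := nonempty_of_isProbabilityMeasure μ
  have hc : 0 ≤ c := (abs_nonneg _).trans (hgc z₀)
  have shift (π : Measure Z) [IsProbabilityMeasure π] :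
      ∫ z, (g z + c) ∂π = ∫ z, g z ∂π + c := by
    rw [integral_add (.of_bound hg.aestronglyMeasurable c (.of_forall hgc)) (integrable_const c),
      integral_const, probReal_univ, one_smul]
  have := integral_sub_integral_le_of_mem_Icc (hg.add_const c) (M := 2 * c)
    (by linarith)
    (fun z => ⟨by linarith [neg_abs_le (g z), hgc z], by linarith [le_abs_self (g z), hgc z]⟩) hd
  rw [shift μ, shift ν, add_sub_add_right_eq_sub] at this
  exact this

end TotalVariation

section Hilbert

variable {Z : Type*} [MeasurableSpace Z]
  {W : Type*} [NormedAddCommGroup W] [InnerProductSpace ℝ W] [CompleteSpace W]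

theorem norm_integral_sub_integral_le_of_norm_le {μ ν : Measure Z}
    [IsProbabilityMeasure μ] [IsProbabilityMeasure ν] {f : Z → W} (hf : StronglyMeasurable f)
    {σ : ℝ} (hfσ : ∀ z, ‖f z‖ ≤ σ) {d : ℝ}
    (hd : ∀ B, MeasurableSet B → |μ.real B - ν.real B| ≤ d) :
    ‖∫ z, f z ∂μ - ∫ z, f z ∂ν‖ ≤ 2 * σ * d := by
  obtain ⟨z₀⟩ := nonempty_of_isProbabilityMeasure μ
  have hσ : 0 ≤ σ := (norm_nonneg _).trans (hfσ z₀)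
  have hd0 : 0 ≤ d := (abs_nonneg _).trans (hd ∅ .empty)
  have hint (π : Measure Z) [IsProbabilityMeasure π] : Integrable f π :=
    .of_bound hf.aestronglyMeasurable σ (.of_forall hfσ)
  set v := ∫ z, f z ∂μ - ∫ z, f z ∂ν
  -- Test the difference of the means against its own direction `v`.
  have hsq : ‖v‖ ^ 2 ≤ 2 * (‖v‖ * σ) * d := by
    have := integral_sub_integral_le_of_abs_le (μ := μ) (ν := ν)
      (stronglyMeasurable_const.inner hf).measurable
      (fun z => (abs_real_inner_le_norm v (f z)).trans
        (mul_le_mul_of_nonneg_left (hfσ z) (norm_nonneg v))) hd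
    rwa [integral_inner (hint μ), integral_inner (hint ν), ← inner_sub_right,
      real_inner_self_eq_norm_sq] at this
  nlinarith [norm_nonneg v, mul_nonneg hσ hd0]

end Hilbert

section Mixing

variable {Z : Type*} [MeasurableSpace Z] (P : Kernel Z Z) [IsMarkovKernel P]
  (ρ : Measure Z) [IsProbabilityMeasure ρ]

instance isMarkovKernel_kernelIter (m : ℕ) : IsMarkovKernel (kernelIter P m) := by
  induction m with
  | zero => rw [kernelIter]; infer_instance
  | succ n _ => rw [kernelIter]; infer_instance

theorem ae_abs_measureReal_sub_le_phiCoef (m : ℕ) :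
    ∀ᵐ z ∂ρ, ∀ B, MeasurableSet B → |(kernelIter P m z).real B - ρ.real B| ≤ phiCoef P ρ m := by
  have hle_one (z : Z) (B : {B : Set Z // MeasurableSet B}) :
      |(kernelIter P m z B.1).toReal - (ρ B.1).toReal| ≤ 1 :=
    abs_sub_le_of_nonneg_of_le measureReal_nonneg measureReal_le_one measureReal_nonneg
      measureReal_le_one
  filter_upwards [ae_le_essSup (μ := ρ)
    (Filter.isBoundedUnder_of ⟨1, fun z => ciSup_le (hle_one z)⟩)] with z hz B hB
  exact (le_ciSup ⟨1, Set.forall_mem_range.2 (hle_one z)⟩ ⟨B, hB⟩).trans hz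

variable {W : Type*} [NormedAddCommGroup W] [InnerProductSpace ℝ W] [CompleteSpace W]

theorem abs_integral_integral_inner_kernelIter_le {f : Z → W} (hf : StronglyMeasurable f)
    (hf_mean : ∫ z, f z ∂ρ = 0) {σ : ℝ} (hfσ : ∀ z, ‖f z‖ ≤ σ) (m : ℕ) :
    |∫ z, ∫ z', ⟪f z, f z'⟫ ∂(kernelIter P m z) ∂ρ| ≤ 2 * σ ^ 2 * phiCoef P ρ m := by
  obtain ⟨z₀⟩ := nonempty_of_isProbabilityMeasure ρ
  have hσ : 0 ≤ σ := (norm_nonneg _).trans (hfσ z₀)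
  have hpointwise : ∀ᵐ z ∂ρ, ‖∫ z', ⟪f z, f z'⟫ ∂(kernelIter P m z)‖ ≤
      2 * σ ^ 2 * phiCoef P ρ m := by
    filter_upwards [ae_abs_measureReal_sub_le_phiCoef P ρ m] with z hz
    have hmean := norm_integral_sub_integral_le_of_norm_le hf hfσ hz
    rw [hf_mean, sub_zero] at hmean
    rw [integral_inner (.of_bound hf.aestronglyMeasurable σ (.of_forall hfσ))]
    calc ‖⟪f z, ∫ z', f z' ∂(kernelIter P m z)⟫‖
        ≤ ‖f z‖ * ‖∫ z', f z' ∂(kernelIter P m z)‖ := norm_inner_le_norm _ _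
      _ ≤ σ * (2 * σ * phiCoef P ρ m) := by gcongr; exact hfσ z
      _ = 2 * σ ^ 2 * phiCoef P ρ m := by ring
  simpa using norm_integral_le_of_norm_le_const hpointwise

end Mixing

open Finset

theorem one_sub_div_le_rpow_div_add_one {α x : ℝ} (hα : 0 ≤ α) (hx : 0 < x) :
    1 - α / x ≤ (x / (x + 1)) ^ α := by
  have hlog : Real.log ((x + 1) / x) ≤ 1 / x :=
    (Real.log_le_sub_one_of_pos (by positivity)).trans_eq (by field_simp; ring)
  calc 1 - α / x ≤ Real.exp (-(α / x)) := by linarith [Real.add_one_le_exp (-(α / x))]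
    _ ≤ Real.exp (Real.log (x / (x + 1)) * α) := by
        rw [← inv_div (x + 1) x, Real.log_inv, Real.exp_le_exp, div_eq_mul_one_div α x]
        nlinarith
    _ = (x / (x + 1)) ^ α := (Real.rpow_def_of_pos (by positivity) α).symm

theorem one_sub_div_natCast_nonneg {α : ℝ} (hα : α ≤ 1) {k : ℕ} (hk : 1 ≤ k) :
    0 ≤ 1 - α / (k : ℝ) := by
  rw [sub_nonneg, div_le_one (by positivity)]
  exact hα.trans (by exact_mod_cast hk)

theorem prod_Ioc_one_sub_div_le_rpow {α : ℝ} (hα0 : 0 ≤ α) (hα1 : α ≤ 1) {i t : ℕ}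
    (hit : i ≤ t) :
    ∏ k ∈ Ioc i t, (1 - α / (k : ℝ)) ≤ (((i : ℝ) + 1) / ((t : ℝ) + 1)) ^ α := by
  induction t, hit using Nat.le_induction with
  | base => simp [div_self (show (i : ℝ) + 1 ≠ 0 by positivity)]
  | succ t hit ih =>
    have hfactor := one_sub_div_natCast_nonneg hα1 (Nat.le_add_left 1 t)
    rw [prod_Ioc_succ_top hit]
    calc (∏ k ∈ Ioc i t, (1 - α / (k : ℝ))) * (1 - α / ((t + 1 : ℕ) : ℝ))
        ≤ (((i : ℝ) + 1) / ((t : ℝ) + 1)) ^ α * (((t : ℝ) + 1) / ((t : ℝ) + 1 + 1)) ^ α := by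
          gcongr
          simpa using one_sub_div_le_rpow_div_add_one hα0 (x := (t : ℝ) + 1) (by positivity)
      _ = (((i : ℝ) + 1) / (((t + 1 : ℕ) : ℝ) + 1)) ^ α := by
          rw [← Real.mul_rpow (by positivity) (by positivity), div_mul_div_cancel₀ (by positivity)]
          push_cast; ring_nf

theorem rpow_add_one_div_add_one_le {α x y : ℝ} (hα0 : 0 ≤ α) (hα : α ≤ 1 / 2) (hx : 1 ≤ x)
    (hy : 0 < y) : ((x + 1) / (y + 1)) ^ α ≤ 2 * √x * (1 / y) ^ α := by
  have hratio : (x + 1) / (y + 1) ≤ 2 * x * (1 / y) := by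
    rw [div_le_iff₀ (by positivity), mul_one_div, div_mul_eq_mul_div, le_div_iff₀ hy]
    nlinarith
  have htwo : (2 : ℝ) ^ α ≤ 2 := by
    simpa using Real.rpow_le_rpow_of_exponent_le one_le_two (show α ≤ 1 by linarith)
  have hsqrt : x ^ α ≤ √x := by
    rw [Real.sqrt_eq_rpow]; exact Real.rpow_le_rpow_of_exponent_le hx hα
  calc ((x + 1) / (y + 1)) ^ α ≤ (2 * x * (1 / y)) ^ α := by gcongr
    _ = 2 ^ α * x ^ α * (1 / y) ^ α := by
        rw [Real.mul_rpow (by positivity) (by positivity),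
          Real.mul_rpow zero_le_two (by positivity)]
    _ ≤ 2 * √x * (1 / y) ^ α := by gcongr

theorem sqrt_add_one_div_sq_le {x : ℝ} (hx : 0 < x) :
    √(x + 1) / (x + 1) ^ 2 ≤ 2 / √x - 2 / √(x + 1) := by
  set a := √x
  set b := √(x + 1)
  have ha : 0 < a := Real.sqrt_pos.2 hx
  have hab : a ≤ b := Real.sqrt_le_sqrt (by linarith)
  have hb : 0 < b := ha.trans_le hab
  have hb2 : b ^ 2 = x + 1 := Real.sq_sqrt (by linarith)
  have ha2 : a ^ 2 = x := Real.sq_sqrt hx.le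
  -- As `b ^ 2 - a ^ 2 = 1`, the claim reads `1 / b ^ 3 ≤ 2 / (a * b * (a + b))`.
  rw [← hb2, div_sub_div _ _ ha.ne' hb.ne', div_le_div_iff₀ (by positivity) (by positivity)]
  nlinarith [mul_pos ha hb, mul_nonneg (sub_nonneg.2 hab) (pow_pos hb 3).le,
    mul_nonneg (sub_nonneg.2 hab) (mul_pos (mul_pos ha hb) hb).le]

theorem sum_Icc_sqrt_div_sq_le {t : ℕ} (ht : 1 ≤ t) :
    ∑ i ∈ Icc 1 t, √(i : ℝ) / (i : ℝ) ^ 2 ≤ 3 - 2 / √(t : ℝ) := by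
  induction t, ht using Nat.le_induction with
  | base => norm_num
  | succ t ht ih =>
    rw [sum_Icc_succ_top (by omega)]
    have := sqrt_add_one_div_sq_le (x := (t : ℝ)) (by exact_mod_cast ht)
    push_cast
    linarith

theorem sum_Ioc_pow_sub_le {r : ℝ} (hr0 : 0 ≤ r) (hr1 : r < 1) (i t : ℕ) :
    ∑ j ∈ Ioc i t, r ^ (j - i) ≤ r / (1 - r) := by
  rw [← Ico_add_one_add_one_eq_Ioc, sum_Ico_eq_sum_range]
  calc ∑ m ∈ range (t + 1 - (i + 1)), r ^ (i + 1 + m - i)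
      = ∑ m ∈ Ico 1 (t + 1 - i), r ^ m := by
        rw [sum_Ico_eq_sum_range]
        exact sum_congr (by congr 1) fun m _ => by congr 1; omega
    _ ≤ r ^ 1 / (1 - r) := geom_sum_Ico_le_of_lt_one hr0 hr1
    _ = r / (1 - r) := by rw [pow_one]

section WeightedSums

variable {α r K : ℝ} {c : ℕ → ℝ}

theorem prod_Ioc_one_sub_div_nonneg (hα : α ≤ 1) (i t : ℕ) :
    0 ≤ ∏ k ∈ Ioc i t, (1 - α / (k : ℝ)) :=
  prod_nonneg fun k hk => one_sub_div_natCast_nonneg hα (by have := (mem_Ioc.1 hk).1; omega)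

theorem prod_Ioc_one_sub_div_le_one (hα0 : 0 ≤ α) (hα1 : α ≤ 1) (i t : ℕ) :
    ∏ k ∈ Ioc i t, (1 - α / (k : ℝ)) ≤ 1 :=
  prod_le_one (fun k hk => one_sub_div_natCast_nonneg hα1 (by have := (mem_Ioc.1 hk).1; omega))
    fun k _ => sub_le_self _ (by positivity)

theorem sum_Ioc_weighted_le (hα0 : 0 ≤ α) (hα1 : α ≤ 1) (hr0 : 0 ≤ r) (hr1 : r < 1)
    (hK : 0 ≤ K) (hc : ∀ m, 1 ≤ m → |c m| ≤ K * r ^ m) {i : ℕ} (hi : 1 ≤ i) (t : ℕ) :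
    ∑ j ∈ Ioc i t, 1 / (i : ℝ) * (1 / (j : ℝ)) * (∏ k ∈ Ioc i t, (1 - α / (k : ℝ))) *
        (∏ l ∈ Ioc j t, (1 - α / (l : ℝ))) * c (j - i) ≤
      (∏ k ∈ Ioc i t, (1 - α / (k : ℝ))) / (i : ℝ) ^ 2 * (K * (r / (1 - r))) := by
  have hprod_i := prod_Ioc_one_sub_div_nonneg hα1 i t
  have hi' : (0 : ℝ) < i := by exact_mod_cast hi
  calc _ ≤ ∑ j ∈ Ioc i t, (∏ k ∈ Ioc i t, (1 - α / (k : ℝ))) / (i : ℝ) ^ 2 * (K * r ^ (j - i)) :=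
        sum_le_sum fun j hj => by
          have hij : (i : ℝ) ≤ j := by exact_mod_cast (mem_Ioc.1 hj).1.le
          have hprod_j := prod_Ioc_one_sub_div_nonneg hα1 j t
          calc _ ≤ 1 / (i : ℝ) * (1 / (j : ℝ)) * (∏ k ∈ Ioc i t, (1 - α / (k : ℝ))) *
                (∏ l ∈ Ioc j t, (1 - α / (l : ℝ))) * |c (j - i)| := by
                gcongr; exact le_abs_self _
            _ ≤ 1 / (i : ℝ) * (1 / (i : ℝ)) * (∏ k ∈ Ioc i t, (1 - α / (k : ℝ))) * 1 *
                (K * r ^ (j - i)) := by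
                gcongr
                · exact prod_Ioc_one_sub_div_le_one hα0 hα1 j t
                · exact hc _ (by have := (mem_Ioc.1 hj).1; omega)
            _ = _ := by ring
    _ = (∏ k ∈ Ioc i t, (1 - α / (k : ℝ))) / (i : ℝ) ^ 2 * K * ∑ j ∈ Ioc i t, r ^ (j - i) := by
        rw [mul_sum]; exact sum_congr rfl fun j _ => by ring
    _ ≤ _ := by
        rw [mul_assoc]
        gcongr
        exact sum_Ioc_pow_sub_le hr0 hr1 i t

theorem sum_Icc_sum_Ioc_weighted_le (hα0 : 0 ≤ α) (hα : α ≤ 1 / 2) (hr0 : 0 ≤ r) (hr1 : r < 1)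
    (hK : 0 ≤ K) (hc : ∀ m, 1 ≤ m → |c m| ≤ K * r ^ m) {t : ℕ} (ht : 1 ≤ t) :
    ∑ i ∈ Icc 1 t, ∑ j ∈ Ioc i t, 1 / (i : ℝ) * (1 / (j : ℝ)) *
        (∏ k ∈ Ioc i t, (1 - α / (k : ℝ))) * (∏ l ∈ Ioc j t, (1 - α / (l : ℝ))) * c (j - i) ≤
      6 * K * (r / (1 - r)) * (1 / (t : ℝ)) ^ α := by
  have hα1 : α ≤ 1 := by linarith
  calc _ ≤ ∑ i ∈ Icc 1 t, (∏ k ∈ Ioc i t, (1 - α / (k : ℝ))) / (i : ℝ) ^ 2 * (K * (r / (1 - r))) :=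
        sum_le_sum fun i hi => sum_Ioc_weighted_le hα0 hα1 hr0 hr1 hK hc (mem_Icc.1 hi).1 t
    _ ≤ ∑ i ∈ Icc 1 t, 2 * (1 / (t : ℝ)) ^ α * (K * (r / (1 - r))) * (√(i : ℝ) / (i : ℝ) ^ 2) :=
        sum_le_sum fun i hi => by
          obtain ⟨hi, hit⟩ := mem_Icc.1 hi
          have hprod_i := (prod_Ioc_one_sub_div_le_rpow hα0 hα1 hit).trans
            (rpow_add_one_div_add_one_le hα0 hα (by exact_mod_cast hi) (by positivity))
          calc _ ≤ 2 * √(i : ℝ) * (1 / (t : ℝ)) ^ α / (i : ℝ) ^ 2 * (K * (r / (1 - r))) := by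
                gcongr
            _ = _ := by ring
    _ = 2 * (1 / (t : ℝ)) ^ α * (K * (r / (1 - r))) * ∑ i ∈ Icc 1 t, √(i : ℝ) / (i : ℝ) ^ 2 := by
        rw [mul_sum]
    _ ≤ 2 * (1 / (t : ℝ)) ^ α * (K * (r / (1 - r))) * 3 := by
        gcongr
        linarith [sum_Icc_sqrt_div_sq_le ht, show 0 ≤ 2 / √(t : ℝ) by positivity]
    _ = 6 * K * (r / (1 - r)) * (1 / (t : ℝ)) ^ α := by ring

end WeightedSums

theorem cross_term_bound_phi_mixing_theta_one_general
    {Z : Type*} [MeasurableSpace Z]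
    {W : Type*} [NormedAddCommGroup W] [InnerProductSpace ℝ W] [CompleteSpace W]
    (P : Kernel Z Z) [IsMarkovKernel P]
    (ρ : Measure Z) [IsProbabilityMeasure ρ]
    (f : Z → W) (hf_meas : StronglyMeasurable f)
    (hf_mean : ∫ z, f z ∂ρ = 0)
    (σ : ℝ) (hf_bd : ∀ z, ‖f z‖ ≤ σ)
    (α : ℝ) (hα : α ∈ Set.Ioo (0 : ℝ) (1/2))
    (D r : ℝ) (hD : 0 < D) (hr0 : 0 < r) (hr1 : r < 1)
    (hphi : ∀ m : ℕ, 1 ≤ m → phiCoef P ρ m ≤ D * r ^ m)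
    (t : ℕ) (ht : 1 ≤ t) :
    2 * ∑ i ∈ Finset.Icc 1 t, ∑ j ∈ Finset.Ioc i t,
        (1 / (i : ℝ)) * (1 / (j : ℝ)) *
          (∏ k ∈ Finset.Ioc i t, (1 - α / (k : ℝ))) *
          (∏ l ∈ Finset.Ioc j t, (1 - α / (l : ℝ))) *
          (∫ z, ∫ z', ⟪f z, f z'⟫ ∂(kernelIter P (j - i) z) ∂ρ) ≤
      24 * σ ^ 2 / (1 - α) * (D * r / (1 - r)) * (1 / (t : ℝ)) ^ α := by
  obtain ⟨hα0, hα⟩ := hα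
  have hcross (m : ℕ) (hm : 1 ≤ m) :
      |∫ z, ∫ z', ⟪f z, f z'⟫ ∂(kernelIter P m z) ∂ρ| ≤ 2 * σ ^ 2 * D * r ^ m := by
    rw [mul_assoc]
    exact (abs_integral_integral_inner_kernelIter_le P ρ hf_meas hf_mean hf_bd m).trans
      (by gcongr; exact hphi m hm)
  have hbound_nonneg : 0 ≤ 24 * σ ^ 2 * (D * r / (1 - r)) * (1 / (t : ℝ)) ^ α := by
    have : 0 < 1 - r := by linarith
    positivity
  calc _ ≤ 2 * (6 * (2 * σ ^ 2 * D) * (r / (1 - r)) * (1 / (t : ℝ)) ^ α) :=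
        mul_le_mul_of_nonneg_left (sum_Icc_sum_Ioc_weighted_le hα0.le hα.le hr0.le hr1
          (by positivity) hcross ht) zero_le_two
    _ = 24 * σ ^ 2 * (D * r / (1 - r)) * (1 / (t : ℝ)) ^ α := by ring
    _ ≤ 24 * σ ^ 2 * (D * r / (1 - r)) * (1 / (t : ℝ)) ^ α / (1 - α) :=
        le_div_self hbound_nonneg (by linarith) (by linarith)
    _ = _ := by ring

theorem cross_term_bound_phi_mixing_theta_one
    {Z : Type*} [MeasurableSpace Z]
    {W : Type*} [NormedAddCommGroup W] [InnerProductSpace ℝ W] [CompleteSpace W]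
    (P : Kernel Z Z) [IsMarkovKernel P]
    (ρ : Measure Z) [IsProbabilityMeasure ρ]
    (hinv : ρ.bind (fun z => P z) = ρ)
    (f : Z → W) (hf_meas : StronglyMeasurable f) (hf_int : Integrable f ρ)
    (hf_mean : ∫ z, f z ∂ρ = 0)
    (σ : ℝ) (hσ : 0 ≤ σ) (hf_bd : ∀ z, ‖f z‖ ≤ σ)
    (α : ℝ) (hα : α ∈ Set.Ioo (0 : ℝ) (1/2))
    (D r : ℝ) (hD : 0 < D) (hr0 : 0 < r) (hr1 : r < 1)
    (hphi : ∀ m : ℕ, 1 ≤ m → phiCoef P ρ m ≤ D * r ^ m)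
    (t : ℕ) (ht : 1 ≤ t) :
    2 * ∑ i ∈ Finset.Icc 1 t, ∑ j ∈ Finset.Ioc i t,
        (1 / (i : ℝ)) * (1 / (j : ℝ)) *
          (∏ k ∈ Finset.Ioc i t, (1 - α / (k : ℝ))) *
          (∏ l ∈ Finset.Ioc j t, (1 - α / (l : ℝ))) *
          (∫ z, ∫ z', ⟪f z, f z'⟫ ∂(kernelIter P (j - i) z) ∂ρ) ≤
      24 * σ ^ 2 / (1 - α) * (D * r / (1 - r)) * (1 / (t : ℝ)) ^ α :=
  cross_term_bound_phi_mixing_theta_one_general P ρ f hf_meas hf_mean σ hf_bd α hα D r hD hr0 hr1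
    hphi t ht
end

section
/- Let α ∈ (0, 1] and θ ∈ (1/2, 1). Then for every t ∈ ℕ, Σ_{i=1}^{t} (1/i^{2θ}) · (Π_{k=i+1}^{t}(1 − α/k^θ))² ≤ C_θ · (1/α)^{θ/(1−θ)} · (1/(t+1))^θ, where C_θ := 8 + (2/(2θ−1))·(θ/(e(2−2^θ)))^{θ/(1−θ)}. -/
open Finset Real

private lemma sum_Ioc_telescope (g : ℕ → ℝ) {m t : ℕ} (h : m ≤ t) :
    ∑ i ∈ Finset.Ioc m t, (g i - g (i - 1)) = g t - g m := by
  induction t, h using Nat.le_induction with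
  | base => simp
  | succ n hmn ih =>
      rw [Finset.sum_Ioc_succ_top (by omega), ih]
      simp only [Nat.add_sub_cancel]
      ring

private lemma exp_neg_le_rpow {p y : ℝ} (hp : 0 < p) (hy : 0 < y) :
    Real.exp (-y) ≤ (p / Real.exp 1) ^ p * y ^ (-p) := by
  have hyp : 0 < y / p := div_pos hy hp
  have h1 : Real.log (y / p) ≤ y / p - 1 := Real.log_le_sub_one_of_pos hyp
  have h2 : (y / p) ^ p ≤ Real.exp (y - p) := by
    rw [← Real.exp_log hyp, ← Real.exp_one_rpow (Real.log (y/p)),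
      ← Real.rpow_mul (Real.exp_pos 1).le, Real.exp_one_rpow]
    apply Real.exp_le_exp.mpr
    calc Real.log (y / p) * p ≤ (y / p - 1) * p := by nlinarith
      _ = y - p := by field_simp
  have h3 : y ^ p ≤ (p / Real.exp 1) ^ p * Real.exp y := by
    have : y ^ p = p ^ p * (y / p) ^ p := by
      rw [← Real.mul_rpow hp.le hyp.le, mul_div_cancel₀ _ hp.ne']
    rw [this, Real.div_rpow hp.le (Real.exp_pos 1).le, Real.exp_one_rpow, Real.exp_sub] at *
    calc p ^ p * (y / p) ^ p ≤ p ^ p * (Real.exp y / Real.exp p) := by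
          exact mul_le_mul_of_nonneg_left h2 (Real.rpow_nonneg hp.le p)
      _ = p ^ p / Real.exp p * Real.exp y := by ring
  rw [Real.rpow_neg hy.le, Real.exp_neg]
  rw [inv_eq_one_div, inv_eq_one_div, mul_one_div]
  rw [div_le_div_iff₀ (Real.exp_pos y) (Real.rpow_pos_of_pos hy p)]
  linarith [h3]

private lemma bernoulli_neg {s q : ℝ} (hs1 : -1 < s) (hs2 : s ≤ 0) (hq1 : -1 ≤ q) (hq2 : q ≤ 0) :
    1 + q * s ≤ (1 + s) ^ q := by
  have hpos : (0:ℝ) < 1 + s := by linarith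
  have h1 : (1 + s) ^ (-q) ≤ 1 + (-q) * s :=
    rpow_one_add_le_one_add_mul_self hs1.le (by linarith) (by linarith)
  have h2 : (0:ℝ) < 1 + (-q) * s := by nlinarith
  have h3 : 0 < (1 + s) ^ (-q) := Real.rpow_pos_of_pos hpos _
  have h4 : (1 + s) ^ q = ((1 + s) ^ (-q))⁻¹ := by
    rw [← Real.rpow_neg hpos.le, neg_neg]
  rw [h4]
  have h5 : (1 + (-q) * s)⁻¹ ≤ ((1 + s) ^ (-q))⁻¹ := inv_anti₀ h3 h1
  refine le_trans ?_ h5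
  nlinarith [inv_pos.mpr h2, inv_mul_cancel₀ h2.ne', sq_nonneg (q * s)]

set_option maxHeartbeats 1000000 in
theorem psi_theta_bound
    (α θ : ℝ) (hα : α ∈ Set.Ioc (0 : ℝ) 1) (hθ : θ ∈ Set.Ioo (1/2 : ℝ) 1)
    (t : ℕ) :
    ∑ i ∈ Finset.Icc 1 t, (1 / (i : ℝ) ^ (2 * θ)) *
        (∏ k ∈ Finset.Ioc i t, (1 - α / (k : ℝ) ^ θ)) ^ 2 ≤
      (8 + 2 / (2 * θ - 1) * (θ / (Real.exp 1 * (2 - 2 ^ θ))) ^ (θ / (1 - θ))) *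
        (1 / α) ^ (θ / (1 - θ)) * (1 / ((t : ℝ) + 1)) ^ θ := by
  obtain ⟨hα0, hα1⟩ := hα
  obtain ⟨hθ1, hθ2⟩ := hθ
  have h1θ : (0:ℝ) < 1 - θ := by linarith
  have hθ0 : (0:ℝ) < θ := by linarith
  set p : ℝ := θ / (1 - θ) with hp_def
  have hp1 : 1 ≤ p := (le_div_iff₀ h1θ).mpr (by linarith)
  have hp0 : 0 < p := lt_of_lt_of_le one_pos hp1
  have hθp : (1 - θ) * p = θ := by
    rw [hp_def, mul_comm, div_mul_cancel₀ _ h1θ.ne']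
  have h2θ : (2:ℝ) ^ θ < 2 := by
    calc (2:ℝ) ^ θ < 2 ^ (1:ℝ) := by
          exact Real.rpow_lt_rpow_of_exponent_lt one_lt_two hθ2
      _ = 2 := Real.rpow_one 2
  set X : ℝ := θ / (Real.exp 1 * (2 - 2 ^ θ)) with hX_def
  have hX : 0 < X := div_pos hθ0 (mul_pos (Real.exp_pos 1) (by linarith))
  have hinvα : 1 ≤ 1/α := (le_div_iff₀ hα0).mpr (by linarith)
  -- common positivity facts
  have hrpos : ∀ k : ℕ, 1 ≤ k → (1:ℝ) ≤ (k:ℝ) ^ θ := by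
    intro k hk
    calc (1:ℝ) = 1 ^ θ := (Real.one_rpow θ).symm
      _ ≤ (k:ℝ) ^ θ := Real.rpow_le_rpow zero_le_one (by exact_mod_cast hk) hθ0.le
  have hfac : ∀ k : ℕ, 1 ≤ k → 0 ≤ 1 - α / (k:ℝ) ^ θ ∧ α / (k:ℝ) ^ θ ≤ 1 := by
    intro k hk
    have h1 := hrpos k hk
    have h2 : α / (k:ℝ) ^ θ ≤ 1 := by
      rw [div_le_one (by linarith)]; linarith
    exact ⟨by linarith, h2⟩
  set P : ℕ → ℝ := fun i => ∏ k ∈ Finset.Ioc i t, (1 - α / (k : ℝ) ^ θ) with hP_def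
  have hP0 : ∀ i, 0 ≤ P i := by
    intro i
    exact Finset.prod_nonneg fun k hk => (hfac k (by
      have := (Finset.mem_Ioc.mp hk).1; omega)).1
  have hP1 : ∀ i, P i ≤ 1 := by
    intro i
    exact Finset.prod_le_one (fun k hk => (hfac k (by
      have := (Finset.mem_Ioc.mp hk).1; omega)).1)
      (fun k hk => by
        have := div_nonneg hα0.le (Real.rpow_nonneg (Nat.cast_nonneg k) θ); linarith)
  have hXp : (0:ℝ) ≤ X ^ p * (1/α) ^ p * (1 / ((t:ℝ)+1)) ^ θ := by positivity
  rcases Nat.eq_zero_or_pos t with rfl | ht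
  · rw [show Finset.Icc 1 0 = (∅ : Finset ℕ) by rfl, Finset.sum_empty]
    have h8 : (0:ℝ) ≤ 2 / (2*θ-1) * X ^ p := by
      apply mul_nonneg (div_nonneg (by norm_num) (by linarith)) (Real.rpow_nonneg hX.le p)
    apply mul_nonneg (mul_nonneg (by linarith) (by positivity)) (by positivity)
  -- main case t ≥ 1
  set m : ℕ := (t-1)/2 with hm_def
  have hmt : m ≤ t := by omega
  have hsplit : (∑ i ∈ Finset.Ioc 0 m, (1 / (i : ℝ) ^ (2 * θ)) * (P i) ^ 2)
      + (∑ i ∈ Finset.Ioc m t, (1 / (i : ℝ) ^ (2 * θ)) * (P i) ^ 2)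
      = ∑ i ∈ Finset.Icc 1 t, (1 / (i : ℝ) ^ (2 * θ)) * (P i) ^ 2 := by
    rw [show Finset.Icc 1 t = Finset.Ioc 0 t from Finset.Icc_add_one_left_eq_Ioc 0 t]
    exact Finset.sum_Ioc_consecutive _ (Nat.zero_le m) hmt
  have tail_bound : ∑ i ∈ Finset.Ioc m t, (1 / (i : ℝ) ^ (2 * θ)) * (P i) ^ 2
      ≤ 4 * ((1/α) ^ p * (1 / ((t:ℝ)+1)) ^ θ) := by
    have key : ∑ i ∈ Finset.Ioc m t, (α/(i:ℝ)^θ) * (P i)^2 ≤ 1 := by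
      have step : ∀ i ∈ Finset.Ioc m t,
          (α/(i:ℝ)^θ) * (P i)^2 ≤ (fun j => (P j)^2) i - (fun j => (P j)^2) (i-1) := by
        intro i hi
        obtain ⟨hi1, hi2⟩ := Finset.mem_Ioc.mp hi
        have hi1' : 1 ≤ i := by omega
        have hPrec : P (i-1) = (1 - α/(i:ℝ)^θ) * P i := by
          have hIoc : Finset.Ioc (i-1) t = Finset.Icc i t := by
            rw [← Finset.Icc_add_one_left_eq_Ioc]; congr 1; omega
          show (∏ k ∈ Finset.Ioc (i-1) t, (1 - α / (k : ℝ) ^ θ)) = _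
          rw [hIoc, Finset.Icc_eq_cons_Ioc hi2, Finset.prod_cons]
        simp only
        rw [hPrec]
        have h1 := (hfac i hi1').1
        have h2 := (hfac i hi1').2
        have h3 : 0 ≤ α/(i:ℝ)^θ := div_nonneg hα0.le (Real.rpow_nonneg (Nat.cast_nonneg i) θ)
        nlinarith [sq_nonneg (P i), mul_nonneg (mul_nonneg h3 h1) (sq_nonneg (P i))]
      calc ∑ i ∈ Finset.Ioc m t, (α/(i:ℝ)^θ) * (P i)^2
          ≤ ∑ i ∈ Finset.Ioc m t, ((fun j => (P j)^2) i - (fun j => (P j)^2) (i-1)) :=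
            Finset.sum_le_sum step
        _ = (P t)^2 - (P m)^2 := sum_Ioc_telescope (fun j => (P j)^2) hmt
        _ ≤ 1 := by
            have hPt : P t = 1 := by
              show (∏ k ∈ Finset.Ioc t t, (1 - α / (k : ℝ) ^ θ)) = 1
              simp
            rw [hPt]
            nlinarith [sq_nonneg (P m)]
    have hterm : ∀ i ∈ Finset.Ioc m t, (1/(i:ℝ)^(2*θ)) * (P i)^2
        ≤ ((4:ℝ)^θ * (1 / ((t:ℝ)+1))^θ / α) * ((α/(i:ℝ)^θ) * (P i)^2) := by
      intro i hi
      obtain ⟨hi1, hi2⟩ := Finset.mem_Ioc.mp hi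
      have hi1' : 1 ≤ i := by omega
      have hicast : (1:ℝ) ≤ (i:ℝ) := by exact_mod_cast hi1'
      have hipos : (0:ℝ) < (i:ℝ) := by linarith
      have h4i : (t:ℝ) + 1 ≤ 4 * i := by
        have : t + 1 ≤ 4 * i := by omega
        exact_mod_cast this
      have hiθ : (0:ℝ) < (i:ℝ)^θ := Real.rpow_pos_of_pos hipos θ
      have hsq : (1:ℝ)/(i:ℝ)^(2*θ) = (1/(i:ℝ)^θ) * (1/(i:ℝ)^θ) := by
        rw [div_mul_div_comm, one_mul, ← Real.rpow_add hipos]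
        ring_nf
      have hmono : (1:ℝ)/(i:ℝ)^θ ≤ (4:ℝ)^θ * (1 / ((t:ℝ)+1))^θ := by
        have e1 : (1:ℝ)/(i:ℝ)^θ = ((1:ℝ)/(i:ℝ))^θ := by
          rw [Real.div_rpow zero_le_one hipos.le, Real.one_rpow]
        have e2 : (4:ℝ)^θ * (1 / ((t:ℝ)+1))^θ = ((4:ℝ) * (1/((t:ℝ)+1)))^θ := by
          rw [Real.mul_rpow (by norm_num) (by positivity)]
        rw [e1, e2]
        apply Real.rpow_le_rpow (by positivity) _ hθ0.le
        rw [mul_one_div, div_le_div_iff₀ hipos (by positivity)]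
        linarith
      calc (1/(i:ℝ)^(2*θ)) * (P i)^2 = (1/(i:ℝ)^θ) * ((1/(i:ℝ)^θ) * (P i)^2) := by
            rw [hsq]; ring
        _ ≤ ((4:ℝ)^θ * (1 / ((t:ℝ)+1))^θ) * ((1/(i:ℝ)^θ) * (P i)^2) := by
            apply mul_le_mul_of_nonneg_right hmono
            positivity
        _ = ((4:ℝ)^θ * (1 / ((t:ℝ)+1))^θ / α) * ((α/(i:ℝ)^θ) * (P i)^2) := by
            field_simp
    calc ∑ i ∈ Finset.Ioc m t, (1/(i:ℝ)^(2*θ)) * (P i)^2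
        ≤ ∑ i ∈ Finset.Ioc m t, ((4:ℝ)^θ * (1 / ((t:ℝ)+1))^θ / α) * ((α/(i:ℝ)^θ) * (P i)^2) :=
          Finset.sum_le_sum hterm
      _ = ((4:ℝ)^θ * (1 / ((t:ℝ)+1))^θ / α) * ∑ i ∈ Finset.Ioc m t, (α/(i:ℝ)^θ) * (P i)^2 := by
          rw [Finset.mul_sum]
      _ ≤ ((4:ℝ)^θ * (1 / ((t:ℝ)+1))^θ / α) * 1 := by
          apply mul_le_mul_of_nonneg_left key
          positivity
      _ ≤ 4 * ((1/α) ^ p * (1 / ((t:ℝ)+1)) ^ θ) := by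
          rw [mul_one]
          have h4θ : (4:ℝ)^θ ≤ 4 := by
            calc (4:ℝ)^θ ≤ (4:ℝ)^(1:ℝ) :=
                  Real.rpow_le_rpow_of_exponent_le (by norm_num) hθ2.le
              _ = 4 := Real.rpow_one 4
          have hαp : (1:ℝ)/α ≤ (1/α)^p := by
            calc (1:ℝ)/α = (1/α)^(1:ℝ) := (Real.rpow_one _).symm
              _ ≤ (1/α)^p := Real.rpow_le_rpow_of_exponent_le hinvα hp1
          have htp : (0:ℝ) ≤ (1 / ((t:ℝ)+1))^θ := by positivity
          have key2 : (4:ℝ)^θ * (1/α) ≤ 4 * (1/α)^p := by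
            apply mul_le_mul h4θ hαp (by positivity) (by norm_num)
          calc (4:ℝ)^θ * (1 / ((t:ℝ)+1))^θ / α = ((4:ℝ)^θ * (1/α)) * (1 / ((t:ℝ)+1))^θ := by
                ring
            _ ≤ (4 * (1/α)^p) * (1 / ((t:ℝ)+1))^θ := mul_le_mul_of_nonneg_right key2 htp
            _ = 4 * ((1/α) ^ p * (1 / ((t:ℝ)+1)) ^ θ) := by ring
  have head_bound : ∑ i ∈ Finset.Ioc 0 m, (1 / (i : ℝ) ^ (2 * θ)) * (P i) ^ 2
      ≤ 2 / (2*θ-1) * X ^ p * ((1/α) ^ p * (1 / ((t:ℝ)+1)) ^ θ) := by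
    have h2θ1 : (0:ℝ) < 2*θ - 1 := by linarith
    have htpos : (0:ℝ) < (t:ℝ) + 1 := by positivity
    set A : ℝ := α * (2 - 2^θ) / (1 - θ) with hA_def
    have hA : 0 < A := div_pos (mul_pos hα0 (by linarith)) h1θ
    set B : ℝ := ((t:ℝ) + 1) ^ (1 - θ) with hB_def
    have hB : 0 < B := Real.rpow_pos_of_pos htpos _
    set R : ℝ := X ^ p * (1/α) ^ p * (1 / ((t:ℝ)+1)) ^ θ with hR_def
    -- step (b): bound on each product
    have hQ : ∀ i ∈ Finset.Ioc 0 m, (P i)^2 ≤ R := by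
      intro i hi
      obtain ⟨hi1, hi2⟩ := Finset.mem_Ioc.mp hi
      -- lower bound the sum of step sizes
      have hSum : A * B / 2 ≤ ∑ k ∈ Finset.Ioc i t, α / (k:ℝ)^θ := by
        have hstep : ∀ k ∈ Finset.Ioc i t,
            (fun j : ℕ => (α/(1-θ)) * ((j:ℝ)+1)^(1-θ)) k
              - (fun j : ℕ => (α/(1-θ)) * ((j:ℝ)+1)^(1-θ)) (k-1) ≤ α / (k:ℝ)^θ := by
          intro k hk
          obtain ⟨hk1, hk2⟩ := Finset.mem_Ioc.mp hk
          have hk1' : 1 ≤ k := by omega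
          have hkcast : (1:ℝ) ≤ (k:ℝ) := by exact_mod_cast hk1'
          have hkpos : (0:ℝ) < (k:ℝ) := by linarith
          have hcast : (((k-1:ℕ)):ℝ) + 1 = (k:ℝ) := by
            have : ((k-1:ℕ):ℝ) = (k:ℝ) - 1 := by
              rw [Nat.cast_sub hk1']; norm_num
            rw [this]; ring
          show (α/(1-θ)) * ((k:ℝ)+1)^(1-θ) - (α/(1-θ)) * (((k-1:ℕ):ℝ)+1)^(1-θ) ≤ α / (k:ℝ)^θ
          rw [hcast]
          have hbern : ((k:ℝ)+1)^(1-θ) ≤ (k:ℝ)^(1-θ) + (1-θ) / (k:ℝ)^θ := by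
            have h1 : ((1:ℝ) + 1/(k:ℝ))^(1-θ) ≤ 1 + (1-θ) * (1/(k:ℝ)) := by
              have hs : (-1:ℝ) ≤ 1/(k:ℝ) := by
                have : (0:ℝ) ≤ 1/(k:ℝ) := by positivity
                linarith
              exact rpow_one_add_le_one_add_mul_self hs h1θ.le (by linarith)
            have h2 : ((k:ℝ)+1)^(1-θ) = (k:ℝ)^(1-θ) * ((1:ℝ) + 1/(k:ℝ))^(1-θ) := by
              rw [← Real.mul_rpow hkpos.le (by positivity)]
              congr 1
              field_simp
            have h3 : (k:ℝ)^(1-θ) / (k:ℝ) = 1 / (k:ℝ)^θ := by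
              rw [div_eq_div_iff hkpos.ne' (by positivity : (0:ℝ) < (k:ℝ)^θ).ne', one_mul, ← Real.rpow_add hkpos,
                show (1:ℝ) - θ + θ = 1 by ring, Real.rpow_one]
            have h4 : (k:ℝ)^(1-θ) * ((1:ℝ) + 1/(k:ℝ))^(1-θ)
                ≤ (k:ℝ)^(1-θ) * (1 + (1-θ) * (1/(k:ℝ))) := by
              apply mul_le_mul_of_nonneg_left h1 (by positivity)
            rw [h2]
            refine h4.trans (le_of_eq ?_)
            rw [mul_add, mul_one]
            congr 1
            rw [mul_comm (1-θ) _, ← mul_assoc, mul_one_div, h3]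
            ring
          have hmul := mul_le_mul_of_nonneg_left hbern (show (0:ℝ) ≤ α/(1-θ) by positivity)
          rw [sub_le_iff_le_add]
          calc α/(1-θ) * ((k:ℝ)+1)^(1-θ)
              ≤ α/(1-θ) * ((k:ℝ)^(1-θ) + (1-θ)/(k:ℝ)^θ) := hmul
            _ = α / (k:ℝ)^θ + α/(1-θ) * (k:ℝ)^(1-θ) := by
                field_simp
                ring
        have hit : i ≤ t := hi2.trans hmt
        have htele : ∑ k ∈ Finset.Ioc i t,
            ((fun j : ℕ => (α/(1-θ)) * ((j:ℝ)+1)^(1-θ)) k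
              - (fun j : ℕ => (α/(1-θ)) * ((j:ℝ)+1)^(1-θ)) (k-1))
            = (α/(1-θ)) * (((t:ℝ)+1)^(1-θ) - ((i:ℝ)+1)^(1-θ)) := by
          rw [sum_Ioc_telescope (fun j : ℕ => (α/(1-θ)) * ((j:ℝ)+1)^(1-θ)) hit]
          ring
        have hhalf : ((i:ℝ)+1)^(1-θ) ≤ ((t:ℝ)+1)^(1-θ) * (2^θ / 2) := by
          have h2i : 2 * ((i:ℝ)+1) ≤ (t:ℝ) + 1 := by
            have : 2 * (i+1) ≤ t + 1 := by omega
            exact_mod_cast this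
          have h1 : ((i:ℝ)+1)^(1-θ) ≤ (((t:ℝ)+1)/2)^(1-θ) := by
            apply Real.rpow_le_rpow (by positivity) (by linarith) h1θ.le
          refine h1.trans (le_of_eq ?_)
          rw [Real.div_rpow htpos.le (by norm_num)]
          rw [show ((2:ℝ))^(1-θ) = 2 / 2^θ by
            rw [Real.rpow_sub (by norm_num), Real.rpow_one]]
          rw [div_div_eq_mul_div, mul_div_assoc]
        calc A * B / 2 ≤ (α/(1-θ)) * (((t:ℝ)+1)^(1-θ) - ((i:ℝ)+1)^(1-θ)) := by
              rw [hA_def, hB_def]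
              have : (0:ℝ) < 2^θ := by positivity
              have hex : α * (2 - 2^θ) / (1-θ) * ((t:ℝ)+1)^(1-θ) / 2
                  = (α/(1-θ)) * (((t:ℝ)+1)^(1-θ) - ((t:ℝ)+1)^(1-θ) * (2^θ/2)) := by
                field_simp
              rw [hex]
              apply mul_le_mul_of_nonneg_left _ (by positivity)
              linarith [hhalf]
          _ = ∑ k ∈ Finset.Ioc i t,
              ((fun j : ℕ => (α/(1-θ)) * ((j:ℝ)+1)^(1-θ)) k
                - (fun j : ℕ => (α/(1-θ)) * ((j:ℝ)+1)^(1-θ)) (k-1)) := htele.symm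
          _ ≤ ∑ k ∈ Finset.Ioc i t, α / (k:ℝ)^θ := Finset.sum_le_sum hstep
      -- product ≤ exponential
      have hPle : P i ≤ Real.exp (-(∑ k ∈ Finset.Ioc i t, α / (k:ℝ)^θ)) := by
        rw [← Finset.sum_neg_distrib, Real.exp_sum]
        apply Finset.prod_le_prod
        · intro k hk
          exact (hfac k (by have := (Finset.mem_Ioc.mp hk).1; omega)).1
        · intro k hk
          have := Real.add_one_le_exp (-(α / (k:ℝ)^θ))
          linarith
      have hQexp : (P i)^2 ≤ Real.exp (-(A * B)) := by
        have h1 : (P i)^2 ≤ (Real.exp (-(∑ k ∈ Finset.Ioc i t, α / (k:ℝ)^θ)))^2 := by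
          apply pow_le_pow_left₀ (hP0 i) hPle
        refine h1.trans ?_
        rw [sq, ← Real.exp_add]
        apply Real.exp_le_exp.mpr
        linarith [hSum]
      -- exponential ≤ power bound
      have hfin : Real.exp (-(A * B)) ≤ R := by
        have h1 := exp_neg_le_rpow hp0 (mul_pos hA hB)
        refine h1.trans (le_of_eq ?_)
        have hmulsplit : (A * B) ^ (-p) = A ^ (-p) * B ^ (-p) :=
          Real.mul_rpow hA.le hB.le
        have hBp : B ^ (-p) = (1 / ((t:ℝ)+1)) ^ θ := by
          rw [hB_def, ← Real.rpow_mul htpos.le]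
          rw [show (1-θ) * (-p) = -θ by rw [mul_neg, hθp]]
          rw [Real.rpow_neg htpos.le, one_div, Real.inv_rpow htpos.le]
        have hAp : (p / Real.exp 1) ^ p * A ^ (-p) = X ^ p * (1/α) ^ p := by
          rw [Real.rpow_neg hA.le, ← Real.inv_rpow hA.le,
            ← Real.mul_rpow (by positivity) (by positivity),
            ← Real.mul_rpow hX.le (by positivity)]
          congr 1
          rw [hA_def, hX_def, hp_def]
          have hexp0 : Real.exp 1 ≠ 0 := (Real.exp_pos 1).ne'
          have h2ne : (2:ℝ) - 2^θ ≠ 0 := by linarith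
          field_simp
        rw [hmulsplit, ← mul_assoc, hAp, hBp, hR_def]
      exact hQexp.trans hfin
    -- step (c): sum of 1/i^(2θ)
    have hsum2θ : ∑ i ∈ Finset.Ioc 0 m, (1:ℝ)/(i:ℝ)^(2*θ) ≤ 2/(2*θ-1) := by
      have hone : (1:ℝ) ≤ 1/(2*θ-1) := by
        rw [le_div_iff₀ h2θ1]; linarith
      have h2d : 2/(2*θ-1) = 1/(2*θ-1) + 1/(2*θ-1) := by ring
      rcases Nat.eq_zero_or_pos m with hm0 | hm1
      · rw [hm0]
        simp only [Finset.Ioc_self, Finset.sum_empty]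
        linarith
      · have hsplit2 : (∑ i ∈ Finset.Ioc (0:ℕ) 1, (1:ℝ)/(i:ℝ)^(2*θ))
            + (∑ i ∈ Finset.Ioc 1 m, (1:ℝ)/(i:ℝ)^(2*θ))
            = ∑ i ∈ Finset.Ioc 0 m, (1:ℝ)/(i:ℝ)^(2*θ) :=
          Finset.sum_Ioc_consecutive _ (by omega) (by omega)
        have h1term : ∑ i ∈ Finset.Ioc (0:ℕ) 1, (1:ℝ)/(i:ℝ)^(2*θ) = 1 := by
          rw [show Finset.Ioc (0:ℕ) 1 = {1} by decide, Finset.sum_singleton]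
          norm_num
        have htail2 : ∑ i ∈ Finset.Ioc 1 m, (1:ℝ)/(i:ℝ)^(2*θ) ≤ 1/(2*θ-1) := by
          set g : ℕ → ℝ := fun j => -((j:ℝ)^(1-2*θ))/(2*θ-1) with hg_def
          have hstep2 : ∀ i ∈ Finset.Ioc 1 m, (1:ℝ)/(i:ℝ)^(2*θ) ≤ g i - g (i-1) := by
            intro i hi
            obtain ⟨hi1, hi2⟩ := Finset.mem_Ioc.mp hi
            have hicast : (2:ℝ) ≤ (i:ℝ) := by exact_mod_cast hi1
            have hipos : (0:ℝ) < (i:ℝ) := by linarith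
            have hpos2θ : (0:ℝ) < (i:ℝ)^(2*θ) := Real.rpow_pos_of_pos hipos _
            have hinvi : (0:ℝ) < 1/(i:ℝ) := by positivity
            have hinvi1 : 1/(i:ℝ) < 1 := by rw [div_lt_one hipos]; linarith
            have hb := bernoulli_neg (s := -(1/(i:ℝ))) (q := 1-2*θ)
              (by linarith) (by linarith) (by linarith) (by linarith)
            have hbase : (1:ℝ) + -(1/(i:ℝ)) = ((i:ℝ)-1)/(i:ℝ) := by
              field_simp
              ring
            rw [hbase] at hb
            have hmul := mul_le_mul_of_nonneg_left hb
              (Real.rpow_nonneg hipos.le (1-2*θ))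
            have hrw : (i:ℝ)^(1-2*θ) * (((i:ℝ)-1)/(i:ℝ))^(1-2*θ) = ((i:ℝ)-1)^(1-2*θ) := by
              rw [← Real.mul_rpow hipos.le (div_nonneg (by linarith) hipos.le)]
              congr 1
              field_simp
            rw [hrw] at hmul
            have h5 : (i:ℝ)^(1-2*θ)/(i:ℝ) = 1/(i:ℝ)^(2*θ) := by
              rw [div_eq_div_iff hipos.ne' hpos2θ.ne', one_mul, ← Real.rpow_add hipos,
                show 1-2*θ+2*θ = (1:ℝ) by ring, Real.rpow_one]
            have hexpand : (i:ℝ)^(1-2*θ) * (1 + (1-2*θ) * -(1/(i:ℝ)))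
                = (i:ℝ)^(1-2*θ) + (2*θ-1) * ((i:ℝ)^(1-2*θ)/(i:ℝ)) := by
              ring
            rw [hexpand, h5] at hmul
            have hcast' : ((i-1:ℕ):ℝ) = (i:ℝ) - 1 := by
              rw [Nat.cast_sub (by omega)]; norm_num
            have hgi : g i - g (i-1) = (((i:ℝ)-1)^(1-2*θ) - (i:ℝ)^(1-2*θ))/(2*θ-1) := by
              rw [hg_def]
              simp only
              rw [hcast']
              ring
            rw [hgi, le_div_iff₀ h2θ1]
            linarith
          calc ∑ i ∈ Finset.Ioc 1 m, (1:ℝ)/(i:ℝ)^(2*θ)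
              ≤ ∑ i ∈ Finset.Ioc 1 m, (g i - g (i-1)) := Finset.sum_le_sum hstep2
            _ = g m - g 1 := sum_Ioc_telescope g (by omega)
            _ ≤ 1/(2*θ-1) := by
                have hgm : g m = -((m:ℝ)^(1-2*θ))/(2*θ-1) := by rw [hg_def]
                have hg1 : g 1 = -1/(2*θ-1) := by
                  rw [hg_def]
                  norm_num
                have hmnn : (0:ℝ) ≤ (m:ℝ)^(1-2*θ) := Real.rpow_nonneg (Nat.cast_nonneg m) _
                rw [hgm, hg1]
                calc -((m:ℝ)^(1-2*θ))/(2*θ-1) - (-1/(2*θ-1))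
                    = (1 - (m:ℝ)^(1-2*θ))/(2*θ-1) := by ring
                  _ ≤ 1/(2*θ-1) := by gcongr; linarith
        linarith [hsplit2, h1term, htail2]
    -- combine
    have hR0 : 0 ≤ R := hXp
    calc ∑ i ∈ Finset.Ioc 0 m, (1 / (i : ℝ) ^ (2 * θ)) * (P i) ^ 2
        ≤ ∑ i ∈ Finset.Ioc 0 m, (1 / (i : ℝ) ^ (2 * θ)) * R := by
          apply Finset.sum_le_sum
          intro i hi
          apply mul_le_mul_of_nonneg_left (hQ i hi) (by positivity)
      _ = (∑ i ∈ Finset.Ioc 0 m, (1:ℝ)/(i:ℝ)^(2*θ)) * R := by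
          rw [Finset.sum_mul]
      _ ≤ 2/(2*θ-1) * R := mul_le_mul_of_nonneg_right hsum2θ hR0
      _ = 2 / (2*θ-1) * X ^ p * ((1/α) ^ p * (1 / ((t:ℝ)+1)) ^ θ) := by
          rw [hR_def]; ring
  calc ∑ i ∈ Finset.Icc 1 t, (1 / (i : ℝ) ^ (2 * θ)) * (P i) ^ 2
      = (∑ i ∈ Finset.Ioc 0 m, (1 / (i : ℝ) ^ (2 * θ)) * (P i) ^ 2)
      + (∑ i ∈ Finset.Ioc m t, (1 / (i : ℝ) ^ (2 * θ)) * (P i) ^ 2) := hsplit.symm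
    _ ≤ 2 / (2*θ-1) * X ^ p * ((1/α) ^ p * (1 / ((t:ℝ)+1)) ^ θ)
        + 4 * ((1/α) ^ p * (1 / ((t:ℝ)+1)) ^ θ) := add_le_add head_bound tail_bound
    _ ≤ (8 + 2 / (2*θ-1) * X ^ p) * (1/α) ^ p * (1 / ((t:ℝ)+1)) ^ θ := by
        have h1 : (0:ℝ) ≤ (1/α) ^ p * (1 / ((t:ℝ)+1)) ^ θ := by positivity
        nlinarith [h1]
end
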